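/- If v has at least one child in T and at least two vertices of S lie outside T(v), then there exists a Hamiltonian cycle on S that conforms to T₁ but not to T; hence Λ(T) is a strict subset of Λ(T₁). -/

import Mathlib

/-- A rooted tree on a vertex type `V`, given by a parent function under which
every vertex reaches the root. -/
structure ParentTree (V : Type) where
  root : V
  parent : V → V
  parent_root : parent root = root
  reaches_root : ∀ v, ∃ k, parent^[k] v = root

namespace ParentTree

variable {V : Type}

/-- The set `C(u)` of children of `u`. -/
def children (T : ParentTree V) (u : V) : Set V := {v | T.parent v = u ∧ v ≠ u}

/-- The set `T(u)` of descendants of `u` (including `u` itself). -/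
def desc (T : ParentTree V) (u : V) : Set V := {b | ∃ k, T.parent^[k] b = u}

/-- For a set `U` of siblings, `T(U) = ⋃_{u ∈ U} T(u)`. -/
def descU (T : ParentTree V) (U : Set V) : Set V := ⋃ u ∈ U, T.desc u

end ParentTree

/-- The set of points occurring in a list. -/
def listSet {V : Type} (l : List V) : Set V := {x | x ∈ l}

/-- The weight of a Hamiltonian cycle given as a list: the sum of distances
over cyclically consecutive pairs. -/
def cycleWeight {V X : Type} [MetricSpace X] (f : V → X) (h : List V) : ℝ :=
  ((h.zip (h.rotate 1)).map fun p => dist (f p.1) (f p.2)).sum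

/-- A Hamiltonian cycle on the point set: a cyclic ordering of all points,
represented as a duplicate-free list containing every point. -/
def IsHamCycle {V : Type} (h : List V) : Prop := h.Nodup ∧ ∀ x : V, x ∈ h

/-- The set `A` forms a contiguous cyclic arc of the cycle `h`. -/
def IsCyclicArc {V : Type} (A : Set V) (h : List V) : Prop :=
  ∃ i : ℕ, listSet ((h.rotate i).take A.ncard) = A

/-- A Hamiltonian cycle conforms to the rooted tree `T` if for every node `u`
the set `T(u)` of descendants of `u` forms a contiguous cyclic arc of the cycle. -/
def CycleConforms {V : Type} (T : ParentTree V) (h : List V) : Prop :=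
  ∀ u : V, IsCyclicArc (T.desc u) h

/-!
Traverse `T₁` depth-first, except that at `u` the leaf `v` is visited immediately before `u`,
and the subtrees of the former children of `v` immediately after `u`. Every subtree of `T₁` is
an interval of this traversal, so the traversal (rotated to start at `v`) is a Hamiltonian cycle
conforming to `T₁`. In it the two neighbours of `v` are `u` and the last vertex of the cycle.
Both lie outside `T(v)`: the block following `u` is exactly `T(v) \ {v}`, and some vertex other
than `u` lies outside `T(v)`, so the cycle continues past that block. As `|T(v)| ≥ 2`, the set
`T(v)` is then not an arc.
-/
namespace ParentTree

variable {V : Type} (T : ParentTree V)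

lemma notMem_children_self (w : V) : w ∉ T.children w := fun h => h.2 rfl

lemma mem_desc_self (w : V) : w ∈ T.desc w := ⟨0, rfl⟩

lemma eq_root_of_iterate_eq_self {w : V} {k : ℕ} (hk : k ≠ 0) (h : T.parent^[k] w = w) :
    w = T.root := by
  obtain ⟨m, hm⟩ := T.reaches_root w
  have hw : T.parent^[k * (m + 1) - m + m] w = w := by
    rw [Nat.sub_add_cancel (by nlinarith [Nat.one_le_iff_ne_zero.2 hk])]
    exact Function.IsPeriodicPt.mul_const h (m + 1)
  rwa [Function.iterate_add_apply, hm, Function.iterate_fixed T.parent_root, eq_comm] at hw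

lemma notMem_desc_of_mem_children {c w : V} (h : c ∈ T.children w) : w ∉ T.desc c := by
  rintro ⟨k, hk⟩
  have hw : w = T.root :=
    T.eq_root_of_iterate_eq_self k.succ_ne_zero (by rw [Function.iterate_succ_apply', hk, h.1])
  rw [hw, Function.iterate_fixed T.parent_root] at hk
  exact h.2 (hk.symm.trans hw.symm)

lemma desc_subset_of_mem_children {c w : V} (h : c ∈ T.children w) : T.desc c ⊆ T.desc w :=
  fun _ ⟨k, hk⟩ => ⟨k + 1, by rw [Function.iterate_succ_apply', hk, h.1]⟩

lemma mem_desc_iff {x w : V} : x ∈ T.desc w ↔ x = w ∨ ∃ c ∈ T.children w, x ∈ T.desc c := by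
  constructor
  · rintro ⟨k, hk⟩
    induction k generalizing x with
    | zero => exact Or.inl hk
    | succ n ih =>
      rw [Function.iterate_succ_apply'] at hk
      by_cases hn : T.parent^[n] x = w
      · exact ih hn
      · exact Or.inr ⟨_, ⟨hk, hn⟩, n, rfl⟩
  · rintro (rfl | ⟨c, hc, hx⟩)
    · exact T.mem_desc_self x
    · exact T.desc_subset_of_mem_children hc hx

lemma mem_desc_or_mem_desc {x a b : V} (ha : x ∈ T.desc a) (hb : x ∈ T.desc b) :
    a ∈ T.desc b ∨ b ∈ T.desc a := by
  obtain ⟨k, hk⟩ := ha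
  obtain ⟨l, hl⟩ := hb
  rcases le_total k l with h | h
  · exact Or.inl ⟨l - k, by rw [← hk, ← Function.iterate_add_apply, Nat.sub_add_cancel h, hl]⟩
  · exact Or.inr ⟨k - l, by rw [← hl, ← Function.iterate_add_apply, Nat.sub_add_cancel h, hk]⟩

lemma parent_mem_desc {a b : V} (h : a ∈ T.desc b) (hab : a ≠ b) : T.parent a ∈ T.desc b := by
  obtain ⟨_ | k, hk⟩ := h
  · exact absurd hk hab
  · exact ⟨k, by rwa [← Function.iterate_succ_apply]⟩

lemma disjoint_desc {c₁ c₂ w : V} (h₁ : c₁ ∈ T.children w) (h₂ : c₂ ∈ T.children w)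
    (hne : c₁ ≠ c₂) : Disjoint (T.desc c₁) (T.desc c₂) := by
  refine Set.disjoint_left.2 fun x hx₁ hx₂ => ?_
  rcases T.mem_desc_or_mem_desc hx₁ hx₂ with h | h
  · exact T.notMem_desc_of_mem_children h₂ (h₁.1 ▸ T.parent_mem_desc h hne)
  · exact T.notMem_desc_of_mem_children h₁ (h₂.1 ▸ T.parent_mem_desc h hne.symm)

lemma desc_root : T.desc T.root = Set.univ :=
  Set.eq_univ_of_forall T.reaches_root

variable [Finite V]

lemma ncard_desc_lt {c w : V} (h : c ∈ T.children w) : (T.desc c).ncard < (T.desc w).ncard :=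
  Set.ncard_lt_ncard ⟨T.desc_subset_of_mem_children h,
    fun hsub => T.notMem_desc_of_mem_children h (hsub (T.mem_desc_self w))⟩

lemma two_le_ncard_desc {w : V} (h : (T.children w).Nonempty) : 2 ≤ (T.desc w).ncard := by
  obtain ⟨c, hc⟩ := h
  rw [← Set.ncard_pair hc.2]
  exact Set.ncard_le_ncard (Set.pair_subset (T.desc_subset_of_mem_children hc (T.mem_desc_self c))
    (T.mem_desc_self w))

end ParentTree

section CyclicArc

variable {V : Type}

lemma ncard_listSet {l : List V} (h : l.Nodup) : (listSet l).ncard = l.length := by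
  classical
  rw [show listSet l = ↑l.toFinset from Set.ext fun _ => List.mem_toFinset.symm,
    Set.ncard_coe_finset, List.toFinset_card_of_nodup h]

lemma isCyclicArc_of_infix {l h : List V} (hl : l.Nodup) (hlh : l <:+: h) :
    IsCyclicArc (listSet l) h := by
  obtain ⟨s, t, rfl⟩ := hlh
  refine ⟨s.length, ?_⟩
  rw [ncard_listSet hl, List.append_assoc, List.rotate_append_length_eq, List.append_assoc,
    List.take_left]

lemma IsCyclicArc.rotate {A : Set V} {h : List V} (hA : IsCyclicArc A h) (k : ℕ) :
    IsCyclicArc A (h.rotate k) := by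
  obtain ⟨i, hi⟩ := hA
  refine ⟨h.length * k - k + i, ?_⟩
  by_cases hne : h = []
  · simpa [hne] using hi
  have hk : k ≤ h.length * k := Nat.le_mul_of_pos_left k (List.length_pos_iff.2 hne)
  rwa [List.rotate_rotate, ← Nat.add_assoc, Nat.add_sub_cancel' hk, ← List.rotate_rotate,
    List.rotate_length_mul]

lemma IsHamCycle.rotate {h : List V} (hh : IsHamCycle h) (k : ℕ) : IsHamCycle (h.rotate k) :=
  ⟨List.nodup_rotate.2 hh.1, fun x => List.mem_rotate.2 (hh.2 x)⟩

lemma mem_take_append_of_notMem {D E : List V} {m : ℕ} {v x : V} (hv : v ∈ (D ++ E).take m)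
    (hvD : v ∉ D) (hx : x ∈ D) : x ∈ (D ++ E).take m := by
  rw [List.take_append] at hv ⊢
  have hlen : D.length < m := by
    by_contra hle
    rw [Nat.sub_eq_zero_of_le (not_lt.1 hle), List.take_zero, List.append_nil] at hv
    exact hvD (List.mem_of_mem_take hv)
  rw [List.take_of_length_le hlen.le]
  exact List.mem_append_left _ hx

lemma not_isCyclicArc_of_neighbors_notMem {A : Set V} {v x y : V} {l : List V}
    (hnd : ((v :: y :: l) ++ [x]).Nodup) (hv : v ∈ A) (hA : 2 ≤ A.ncard) (hy : y ∉ A)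
    (hx : x ∉ A) : ¬ IsCyclicArc A ((v :: y :: l) ++ [x]) := by
  rintro ⟨i, hi⟩
  obtain ⟨j, hjlt, hj⟩ : ∃ j < ((v :: y :: l) ++ [x]).length,
      listSet ((((v :: y :: l) ++ [x]).rotate j).take A.ncard) = A :=
    ⟨_, Nat.mod_lt _ (by simp), by rwa [List.rotate_mod]⟩
  rcases j with _ | j
  · obtain ⟨k, hk⟩ := Nat.exists_eq_add_of_le' hA
    apply hy
    rw [← hj, List.rotate_zero, hk]
    simp [listSet]
  -- rotated by `j + 1`, the list starts with a suffix that ends in `x` and does not contain `v`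
  rw [List.rotate_eq_drop_append_take hjlt.le] at hj
  have hxD : x ∈ ((v :: y :: l) ++ [x]).drop (j + 1) := by
    rw [List.drop_append_of_le_length (by simpa using hjlt)]
    exact List.mem_append_right _ (List.mem_singleton_self x)
  have hvD : v ∉ ((v :: y :: l) ++ [x]).drop (j + 1) := by
    rw [← List.take_append_drop (j + 1) ((v :: y :: l) ++ [x]), List.nodup_append] at hnd
    exact fun hvD => hnd.2.2 v (by simp) v hvD rfl
  rw [← hj] at hv hx
  exact hx (mem_take_append_of_notMem hv hvD hxD)

lemma not_isCyclicArc_of_isHamCycle {A : Set V} {v y : V} {K M : List V}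
    (hh : IsHamCycle (v :: y :: (K ++ M))) (hA : ∀ x, x ∈ A ↔ x = v ∨ x ∈ K) (hy : y ∉ A)
    (hA2 : 2 ≤ A.ncard) (hout : 2 ≤ (Set.univ \ A).ncard) :
    ¬ IsCyclicArc A (v :: y :: (K ++ M)) := by
  obtain ⟨z, ⟨-, hzA⟩, hzy⟩ := Set.exists_ne_of_one_lt_ncard hout y
  have hzM : z ∈ M := by
    rcases List.mem_cons.1 (hh.2 z) with rfl | hz
    · exact absurd ((hA _).2 (Or.inl rfl)) hzA
    rcases List.mem_cons.1 hz with rfl | hz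
    · exact absurd rfl hzy
    exact (List.mem_append.1 hz).resolve_left fun hzK => hzA ((hA z).2 (Or.inr hzK))
  obtain ⟨M, x, rfl⟩ := (List.eq_nil_or_concat' M).resolve_left (List.ne_nil_of_mem hzM)
  have hnd := hh.1
  rw [show v :: y :: (K ++ (M ++ [x])) = (v :: y :: (K ++ M)) ++ [x] by simp] at hnd ⊢
  refine not_isCyclicArc_of_neighbors_notMem hnd ((hA v).2 (Or.inl rfl)) hA2 hy ?_
  have hx : x ∉ v :: y :: (K ++ M) := fun hx => (List.nodup_append.1 hnd).2.2 x hx x (by simp) rfl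
  rw [hA]
  rintro (rfl | hxK)
  exacts [hx (by simp), hx (by simp [hxK])]

end CyclicArc

namespace ParentTree

variable {V : Type}

-- `o w` places `w` among its children, so a tour may visit `w` between two child subtrees.
def IsTraversalOrder (T : ParentTree V) (o : V → List V) : Prop :=
  ∀ w, (o w).Nodup ∧ ∀ c, c ∈ o w ↔ c = w ∨ c ∈ T.children w

open Classical in
noncomputable def tour [Finite V] (T : ParentTree V) (o : V → List V) (w : V) : List V :=
  ((o w).map fun c => if _ : c ∈ T.children w then T.tour o c else [c]).flatten
termination_by (T.desc w).ncard
decreasing_by exact T.ncard_desc_lt ‹_›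

section Tour

variable [Finite V] {T : ParentTree V} {o : V → List V}

open Classical in
lemma tour_eq (w : V) :
    T.tour o w = ((o w).map fun c => if c ∈ T.children w then T.tour o c else [c]).flatten := by
  rw [tour]; simp only [dite_eq_ite]

lemma mem_tour (ho : T.IsTraversalOrder o) {x : V} (w : V) : x ∈ T.tour o w ↔ x ∈ T.desc w := by
  induction w using tour.induct T with
  | _ w ih =>
    classical
    rw [tour_eq, T.mem_desc_iff]
    simp only [List.mem_flatten, List.mem_map, exists_exists_and_eq_and, (ho w).2]
    constructor
    · rintro ⟨c, rfl | hc, hx⟩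
      · exact Or.inl (by simpa [T.notMem_children_self] using hx)
      · exact Or.inr ⟨c, hc, (ih c hc).1 (by simpa [hc] using hx)⟩
    · rintro (rfl | ⟨c, hc, hx⟩)
      · exact ⟨x, Or.inl rfl, by simp [T.notMem_children_self]⟩
      · exact ⟨c, Or.inr hc, by simpa [hc] using (ih c hc).2 hx⟩

lemma nodup_tour (ho : T.IsTraversalOrder o) (w : V) : (T.tour o w).Nodup := by
  induction w using tour.induct T with
  | _ w ih =>
    classical
    rw [tour_eq, List.nodup_flatten, List.pairwise_map]
    refine ⟨?_, (ho w).1.pairwise_of_forall_ne fun c hc c' hc' hne x hx hx' => ?_⟩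
    · intro l hl
      obtain ⟨c, -, rfl⟩ := List.mem_map.1 hl
      split_ifs with hc
      exacts [ih c hc, List.nodup_singleton c]
    rw [(ho w).2] at hc hc'
    rcases hc with rfl | hc <;> rcases hc' with rfl | hc'
    · exact hne rfl
    · simp only [T.notMem_children_self, hc', if_true, if_false, List.mem_singleton] at hx hx'
      exact T.notMem_desc_of_mem_children hc' (hx ▸ (mem_tour ho c').1 hx')
    · simp only [T.notMem_children_self, hc, if_true, if_false, List.mem_singleton] at hx hx'
      exact T.notMem_desc_of_mem_children hc (hx' ▸ (mem_tour ho c).1 hx)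
    · simp only [hc, hc', if_true] at hx hx'
      exact Set.disjoint_left.1 (T.disjoint_desc hc hc' hne) ((mem_tour ho c).1 hx)
        ((mem_tour ho c').1 hx')

lemma tour_infix_of_mem_children (ho : T.IsTraversalOrder o) {c w : V}
    (h : c ∈ T.children w) : T.tour o c <:+: T.tour o w := by
  classical
  rw [tour_eq w]
  exact List.infix_of_mem_flatten (List.mem_map.2 ⟨c, ((ho w).2 c).2 (Or.inr h), if_pos h⟩)

lemma tour_infix_of_mem_desc (ho : T.IsTraversalOrder o) {a b : V} (h : a ∈ T.desc b) :
    T.tour o a <:+: T.tour o b := by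
  obtain ⟨k, hk⟩ := h
  induction k generalizing a with
  | zero => rw [← hk]; rfl
  | succ k ih =>
    by_cases hab : a = b
    · rw [hab]
    have hc : a ∈ T.children (T.parent a) :=
      ⟨rfl, fun h => hab (by rw [← hk, Function.iterate_fixed h.symm])⟩
    exact (tour_infix_of_mem_children ho hc).trans (ih hk)

lemma conforms_tour (ho : T.IsTraversalOrder o) : CycleConforms T (T.tour o T.root) := by
  intro w
  rw [show T.desc w = listSet (T.tour o w) from Set.ext fun x => (mem_tour ho w).symm]
  exact isCyclicArc_of_infix (nodup_tour ho w)
    (tour_infix_of_mem_desc ho (T.desc_root ▸ Set.mem_univ w))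

lemma isHamCycle_tour (ho : T.IsTraversalOrder o) : IsHamCycle (T.tour o T.root) :=
  ⟨nodup_tour ho _, fun x => (mem_tour ho _).2 (T.desc_root ▸ Set.mem_univ x)⟩

lemma tour_eq_singleton (ho : T.IsTraversalOrder o) {w : V} (h : T.children w = ∅) :
    T.tour o w = [w] := by
  have hmem : ∀ x, x ∈ T.tour o w ↔ x = w := fun x => by
    rw [mem_tour ho, T.mem_desc_iff, h]; simp
  obtain ⟨a, ha⟩ := List.length_eq_one_iff.1 (by
    rw [← ncard_listSet (nodup_tour ho w), show listSet (T.tour o w) = {w} from Set.ext hmem,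
      Set.ncard_singleton])
  rw [ha, (hmem a).1 (by simp [ha])]

end Tour

def IsDegreeIncreasing (T T₁ : ParentTree V) (u v : V) : Prop :=
  ∀ w, (T.parent w = v → T₁.parent w = u) ∧ (T.parent w ≠ v → T₁.parent w = T.parent w)

open Classical in
noncomputable def degreeIncreasingOrder [Finite V] (T T₁ : ParentTree V) (u v w : V) : List V :=
  if w = u then
    v :: u :: ((T.children v).toFinite.toFinset.toList ++
      (T₁.children u \ insert v (T.children v)).toFinite.toFinset.toList)
  else w :: (T₁.children w).toFinite.toFinset.toList

section DegreeIncreasing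

variable {T T₁ : ParentTree V} {u v : V} (hv : v ∈ T.children u)
  (hT₁ : T.IsDegreeIncreasing T₁ u v)
include hv hT₁

lemma IsDegreeIncreasing.mem_children : v ∈ T₁.children u :=
  ⟨((hT₁ v).2 (hv.1 ▸ hv.2.symm)).trans hv.1, hv.2⟩

lemma IsDegreeIncreasing.children_eq_empty : T₁.children v = ∅ := by
  refine Set.eq_empty_of_forall_notMem fun c hc => ?_
  by_cases hcv : T.parent c = v
  · exact hv.2 (hc.1.symm.trans ((hT₁ c).1 hcv))
  · exact hcv (((hT₁ c).2 hcv).symm.trans hc.1)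

lemma IsDegreeIncreasing.mem_children_of_mem_children {c : V} (hc : c ∈ T.children v) :
    c ∈ T₁.children u :=
  ⟨(hT₁ c).1 hc.1, fun hcu => T.notMem_desc_of_mem_children hv ⟨1, hcu ▸ hc.1⟩⟩

lemma IsDegreeIncreasing.desc_eq {c : V} (hc : c ∈ T.children v) : T₁.desc c = T.desc c := by
  have hc₁ := hT₁.mem_children_of_mem_children hv hc
  suffices ∀ k x, T₁.parent^[k] x = c ↔ T.parent^[k] x = c from
    Set.ext fun x => exists_congr fun k => this k x
  intro k
  induction k with
  | zero => exact fun _ => Iff.rfl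
  | succ k ih =>
    intro x
    simp only [Function.iterate_succ_apply]
    by_cases hx : T.parent x = v
    · rw [(hT₁ x).1 hx, hx]
      exact iff_of_false (fun h => T₁.notMem_desc_of_mem_children hc₁ ⟨k, h⟩)
        (fun h => T.notMem_desc_of_mem_children hc ⟨k, h⟩)
    · rw [(hT₁ x).2 hx, ih]

lemma IsDegreeIncreasing.isTraversalOrder [Finite V] :
    T₁.IsTraversalOrder (degreeIncreasingOrder T T₁ u v) := by
  intro w
  unfold degreeIncreasingOrder
  split_ifs with hw
  · subst w
    have hvu := hT₁.mem_children hv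
    have hchild := fun c => hT₁.mem_children_of_mem_children hv (c := c)
    have hu : u ∉ T.children v := fun h => T.notMem_desc_of_mem_children hv ⟨1, h.1⟩
    refine ⟨?_, fun c => ?_⟩
    · simp only [List.nodup_cons, List.nodup_append, List.mem_cons, List.mem_append,
        Finset.mem_toList, Set.Finite.mem_toFinset, Set.mem_sdiff, Set.mem_insert_iff]
      refine ⟨?_, ?_, Finset.nodup_toList _, Finset.nodup_toList _,
        fun a ha b hb hab => hb.2 (Or.inr (hab ▸ ha))⟩
      · rintro (h | h | ⟨-, h⟩)
        exacts [hv.2 h, T.notMem_children_self v h, h (Or.inl trivial)]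
      · rintro (h | ⟨h, -⟩)
        exacts [hu h, T₁.notMem_children_self u h]
    · simp only [List.mem_cons, List.mem_append, Finset.mem_toList, Set.Finite.mem_toFinset,
        Set.mem_sdiff, Set.mem_insert_iff]
      by_cases hcv : c = v
      · simp [hcv, hvu]
      · have := hchild c
        tauto
  · exact ⟨List.nodup_cons.2 ⟨by simp [T₁.notMem_children_self], Finset.nodup_toList _⟩,
      fun c => by simp⟩

lemma IsDegreeIncreasing.exists_tour_eq [Finite V] :
    ∃ K₁ K₂, T₁.tour (degreeIncreasingOrder T T₁ u v) u = v :: u :: (K₁ ++ K₂) ∧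
      ∀ x, x ∈ T.desc v ↔ x = v ∨ x ∈ K₁ := by
  classical
  set o := degreeIncreasingOrder T T₁ u v
  have ho : T₁.IsTraversalOrder o := hT₁.isTraversalOrder hv
  set piece := fun c => if c ∈ T₁.children u then T₁.tour o c else [c]
  refine ⟨((T.children v).toFinite.toFinset.toList.map piece).flatten,
    ((T₁.children u \ insert v (T.children v)).toFinite.toFinset.toList.map piece).flatten,
    ?_, fun x => ?_⟩
  · rw [tour_eq, show o u = _ from if_pos rfl]
    simp [piece, hT₁.mem_children hv, tour_eq_singleton ho (hT₁.children_eq_empty hv),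
      T₁.notMem_children_self]
  · rw [T.mem_desc_iff]
    simp only [List.mem_flatten, List.mem_map, exists_exists_and_eq_and, Finset.mem_toList,
      Set.Finite.mem_toFinset]
    refine or_congr_right (exists_congr fun c => and_congr_right fun hc => ?_)
    rw [show piece c = T₁.tour o c from if_pos (hT₁.mem_children_of_mem_children hv hc),
      mem_tour ho, hT₁.desc_eq hv hc]

end DegreeIncreasing

end ParentTree

theorem stmt9_general {V : Type} [Fintype V]
    (T T₁ : ParentTree V) (u v : V) (hv : v ∈ T.children u)
    (hpar : ∀ w : V, (T.parent w = v → T₁.parent w = u) ∧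
      (T.parent w ≠ v → T₁.parent w = T.parent w))
    (hchild : (T.children v).Nonempty)
    (houtside : 2 ≤ (Set.univ \ T.desc v).ncard) :
    ∃ h : List V, IsHamCycle h ∧ CycleConforms T₁ h ∧ ¬ CycleConforms T h := by
  have hT₁ : T.IsDegreeIncreasing T₁ u v := hpar
  have ho := hT₁.isTraversalOrder hv
  obtain ⟨K₁, K₂, hu, hK₁⟩ := hT₁.exists_tour_eq hv
  obtain ⟨a, b, hab⟩ := ParentTree.tour_infix_of_mem_desc ho (T₁.desc_root ▸ Set.mem_univ u)
  have hham := (ParentTree.isHamCycle_tour ho).rotate a.length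
  have hconf : CycleConforms T₁ _ := fun w => (ParentTree.conforms_tour ho w).rotate a.length
  rw [← hab, List.append_assoc, List.rotate_append_length_eq, hu] at hham hconf
  refine ⟨_, hham, hconf, fun hT => ?_⟩
  simp only [List.cons_append, List.append_assoc] at hham hT
  exact not_isCyclicArc_of_isHamCycle hham hK₁ (T.notMem_desc_of_mem_children hv)
    (T.two_le_ncard_desc hchild) houtside (hT v)

/-- If `v` has at least one child in `T` and at least two vertices lie outside
`T(v)`, then the degree-increasing operation strictly enlarges the tour
neighbourhood: some Hamiltonian cycle conforms to `T₁` but not to `T`. -/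
theorem stmt9 {V X : Type} [Fintype V] [MetricSpace X]
    (hn : 3 ≤ Fintype.card V) (f : V → X) (hf : Function.Injective f)
    (T T₁ : ParentTree V) (u v : V) (hv : v ∈ T.children u)
    (hroot : T₁.root = T.root)
    (hpar : ∀ w : V, (T.parent w = v → T₁.parent w = u) ∧
      (T.parent w ≠ v → T₁.parent w = T.parent w))
    (hchild : (T.children v).Nonempty)
    (houtside : 2 ≤ (Set.univ \ T.desc v).ncard) :
    ∃ h : List V, IsHamCycle h ∧ CycleConforms T₁ h ∧ ¬ CycleConforms T h :=
  stmt9_general T T₁ u v hv hpar hchild houtside
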